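/- Let H be a Hopf algebra over a commutative ring k, A a k-algebra, and φ : H ⊗ A → A a map satisfying φ(h ⊗ ab) = Σ φ(h₍₁₎ ⊗ a) φ(h₍₂₎ ⊗ b) (condition (ii) of a twisted partial action). Define ψ : H ⊗ A → A ⊗ H by ψ(h ⊗ a) = Σ φ(h₍₁₎ ⊗ a) ⊗ h₍₂₎. Then ψ satisfies (μ_A ⊗ H) ∘ (A ⊗ ψ) ∘ (ψ ⊗ A) = ψ ∘ (H ⊗ μ_A); consequently the map ∇(a ⊗ h) = Σ a φ(h₍₁₎ ⊗ 1_A) ⊗ h₍₂₎ is idempotent on A ⊗ H. -/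

import Mathlib

/-!
Write `∇_b(a ⊗ v) = a ψ(v ⊗ b)` (`nablaAt ψ b`), so that `∇ = ∇_1` and the first identity says
`∇_b(ψ(v ⊗ a)) = ψ(v ⊗ ab)`. For `ψ = psiOf φ` this is coassociativity of `Δ` followed by
condition (ii). Since `∇_b` is left `A`-linear,
`∇(∇(a ⊗ v)) = a ∇(ψ(v ⊗ 1)) = a ψ(v ⊗ 1) = ∇(a ⊗ v)`.
-/

open TensorProduct

variable {R A V H : Type*} [CommRing R] [Ring A] [Algebra R A]
  [AddCommGroup V] [Module R V] [Ring H] [HopfAlgebra R H]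

/-- (μ_A ⊗ V) ∘ (A ⊗ ψ) ∘ (ψ ⊗ A) : (V ⊗ A) ⊗ A → A ⊗ V -/
noncomputable def psiMulLHS (ψ : V ⊗[R] A →ₗ[R] A ⊗[R] V) :
    (V ⊗[R] A) ⊗[R] A →ₗ[R] A ⊗[R] V :=
  TensorProduct.map (LinearMap.mul' R A) LinearMap.id
    ∘ₗ (TensorProduct.assoc R A A V).symm.toLinearMap
    ∘ₗ LinearMap.lTensor A ψ
    ∘ₗ (TensorProduct.assoc R A V A).toLinearMap
    ∘ₗ LinearMap.rTensor A ψ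

/-- ψ ∘ (V ⊗ μ_A) : (V ⊗ A) ⊗ A → A ⊗ V -/
noncomputable def psiMulRHS (ψ : V ⊗[R] A →ₗ[R] A ⊗[R] V) :
    (V ⊗[R] A) ⊗[R] A →ₗ[R] A ⊗[R] V :=
  ψ ∘ₗ LinearMap.lTensor V (LinearMap.mul' R A)
    ∘ₗ (TensorProduct.assoc R V A A).toLinearMap

/-- ∇ = (μ_A ⊗ V) ∘ (A ⊗ ψ) ∘ (A ⊗ V ⊗ η_A) : A ⊗ V → A ⊗ V -/
noncomputable def nabla (ψ : V ⊗[R] A →ₗ[R] A ⊗[R] V) :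
    A ⊗[R] V →ₗ[R] A ⊗[R] V :=
  TensorProduct.map (LinearMap.mul' R A) LinearMap.id
    ∘ₗ (TensorProduct.assoc R A A V).symm.toLinearMap
    ∘ₗ LinearMap.lTensor A ψ
    ∘ₗ LinearMap.lTensor A ((TensorProduct.mk R V A).flip 1)

/-- ψ(h ⊗ a) = Σ φ(h₍₁₎ ⊗ a) ⊗ h₍₂₎. -/
noncomputable def psiOf (φ : H ⊗[R] A →ₗ[R] A) : H ⊗[R] A →ₗ[R] A ⊗[R] H :=
  LinearMap.rTensor H φ
    ∘ₗ (TensorProduct.assoc R H A H).symm.toLinearMap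
    ∘ₗ LinearMap.lTensor H (TensorProduct.comm R H A).toLinearMap
    ∘ₗ (TensorProduct.assoc R H H A).toLinearMap
    ∘ₗ LinearMap.rTensor A (Coalgebra.comul : H →ₗ[R] H ⊗[R] H)

/-- σ(h ⊗ g) = Σ ω(h₍₁₎ ⊗ g₍₁₎) ⊗ h₍₂₎g₍₂₎. -/
noncomputable def sigmaOf (ω : H ⊗[R] H →ₗ[R] A) : H ⊗[R] H →ₗ[R] A ⊗[R] H :=
  TensorProduct.map ω (LinearMap.mul' R H)
    ∘ₗ (TensorProduct.tensorTensorTensorComm R H H H H).toLinearMap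
    ∘ₗ TensorProduct.map (Coalgebra.comul : H →ₗ[R] H ⊗[R] H)
        (Coalgebra.comul : H →ₗ[R] H ⊗[R] H)

/-- Condition (ii) of a twisted partial action:
φ(h ⊗ ab) = Σ φ(h₍₁₎ ⊗ a) φ(h₍₂₎ ⊗ b), as maps H ⊗ (A ⊗ A) → A. -/
def IsPartiallyMultiplicative (φ : H ⊗[R] A →ₗ[R] A) : Prop :=
  φ ∘ₗ LinearMap.lTensor H (LinearMap.mul' R A) =
    LinearMap.mul' R A ∘ₗ TensorProduct.map φ φ
      ∘ₗ (TensorProduct.tensorTensorTensorComm R H H A A).toLinearMap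
      ∘ₗ LinearMap.rTensor (A ⊗[R] A) (Coalgebra.comul : H →ₗ[R] H ⊗[R] H)

noncomputable def nablaAt (ψ : V ⊗[R] A →ₗ[R] A ⊗[R] V) (b : A) :
    A ⊗[R] V →ₗ[R] A ⊗[R] V :=
  TensorProduct.map (LinearMap.mul' R A) LinearMap.id
    ∘ₗ (TensorProduct.assoc R A A V).symm.toLinearMap
    ∘ₗ LinearMap.lTensor A (ψ ∘ₗ (TensorProduct.mk R V A).flip b)

section Nabla

variable (ψ : V ⊗[R] A →ₗ[R] A ⊗[R] V)

theorem nablaAt_one : nablaAt ψ 1 = nabla ψ := by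
  rw [nablaAt, nabla, LinearMap.lTensor_comp]

theorem nablaAt_tmul (b a : A) (v : V) :
    nablaAt ψ b (a ⊗ₜ v) = (LinearMap.mulLeft R a).rTensor V (ψ (v ⊗ₜ b)) := by
  simp only [nablaAt, LinearMap.comp_apply, LinearMap.lTensor_tmul, LinearMap.flip_apply,
    TensorProduct.mk_apply]
  induction ψ (v ⊗ₜ b) using TensorProduct.induction_on with
  | zero => simp only [tmul_zero, map_zero]
  | tmul c w => simp
  | add x y hx hy => simp only [tmul_add, map_add, hx, hy]

theorem nablaAt_rTensor_mulLeft (b a : A) (x : A ⊗[R] V) :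
    nablaAt ψ b ((LinearMap.mulLeft R a).rTensor V x) =
      (LinearMap.mulLeft R a).rTensor V (nablaAt ψ b x) := by
  induction x using TensorProduct.induction_on with
  | zero => simp only [map_zero]
  | tmul c v =>
    rw [LinearMap.rTensor_tmul, LinearMap.mulLeft_apply, nablaAt_tmul, nablaAt_tmul,
      ← LinearMap.rTensor_comp_apply, ← LinearMap.mulLeft_mul]
  | add x y hx hy => simp only [map_add, hx, hy]

theorem psiMulLHS_tmul (v : V) (a b : A) :
    psiMulLHS ψ ((v ⊗ₜ a) ⊗ₜ b) = nablaAt ψ b (ψ (v ⊗ₜ a)) := by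
  simp only [psiMulLHS, nablaAt, LinearMap.comp_apply, LinearMap.rTensor_tmul]
  congr 2
  induction ψ (v ⊗ₜ a) using TensorProduct.induction_on with
  | zero => simp only [zero_tmul, map_zero]
  | tmul c w => simp
  | add x y hx hy => simp only [add_tmul, map_add, hx, hy]

theorem psiMulRHS_tmul (v : V) (a b : A) :
    psiMulRHS ψ ((v ⊗ₜ a) ⊗ₜ b) = ψ (v ⊗ₜ (a * b)) := by
  simp [psiMulRHS]

theorem psiMulLHS_eq_psiMulRHS_iff :
    psiMulLHS ψ = psiMulRHS ψ ↔
      ∀ v a b, nablaAt ψ b (ψ (v ⊗ₜ a)) = ψ (v ⊗ₜ (a * b)) := by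
  refine ⟨fun h v a b => ?_, fun h => TensorProduct.ext_threefold fun v a b => ?_⟩
  · rw [← psiMulLHS_tmul, h, psiMulRHS_tmul]
  · rw [psiMulLHS_tmul, psiMulRHS_tmul, h]

theorem nabla_comp_nabla_of_psiMulLHS_eq (hψ : psiMulLHS ψ = psiMulRHS ψ) :
    nabla ψ ∘ₗ nabla ψ = nabla ψ := by
  have hfix : ∀ v, nablaAt ψ 1 (ψ (v ⊗ₜ 1)) = ψ (v ⊗ₜ 1) := fun v => by
    rw [(psiMulLHS_eq_psiMulRHS_iff ψ).1 hψ, mul_one]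
  refine TensorProduct.ext' fun a v => ?_
  rw [← nablaAt_one, LinearMap.comp_apply, nablaAt_tmul, nablaAt_rTensor_mulLeft, hfix]

end Nabla

section PsiOf

variable (φ : H ⊗[R] A →ₗ[R] A)

theorem psiOf_tmul (h : H) (a : A) :
    psiOf φ (h ⊗ₜ a) =
      TensorProduct.map ((curry φ).flip a) LinearMap.id (Coalgebra.comul h) := by
  simp only [psiOf, LinearMap.comp_apply, LinearMap.rTensor_tmul, LinearEquiv.coe_coe]
  induction Coalgebra.comul (R := R) h using TensorProduct.induction_on with
  | zero => simp only [zero_tmul, map_zero]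
  | tmul h₁ h₂ => simp
  | add x y hx hy => simp only [add_tmul, map_add, hx, hy]

theorem IsPartiallyMultiplicative.curry_flip_mul (hφ : IsPartiallyMultiplicative φ) (a b : A) :
    (curry φ).flip (a * b) =
      LinearMap.mul' R A ∘ₗ TensorProduct.map ((curry φ).flip a) ((curry φ).flip b)
        ∘ₗ Coalgebra.comul := by
  ext h
  have := LinearMap.congr_fun hφ (h ⊗ₜ (a ⊗ₜ b))
  simp only [LinearMap.comp_apply, LinearMap.lTensor_tmul, LinearMap.mul'_apply,
    LinearMap.rTensor_tmul, LinearEquiv.coe_coe] at this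
  simp only [LinearMap.flip_apply, curry_apply, LinearMap.comp_apply, this]
  induction Coalgebra.comul (R := R) h using TensorProduct.induction_on with
  | zero => simp only [zero_tmul, map_zero]
  | tmul h₁ h₂ => simp
  | add x y hx hy => simp only [add_tmul, map_add, hx, hy]

theorem nablaAt_psiOf_comp_map (a b : A) :
    nablaAt (psiOf φ) b ∘ₗ TensorProduct.map ((curry φ).flip a) LinearMap.id =
      TensorProduct.map
          (LinearMap.mul' R A ∘ₗ TensorProduct.map ((curry φ).flip a) ((curry φ).flip b))
          LinearMap.id
        ∘ₗ (TensorProduct.assoc R H H H).symm.toLinearMap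
        ∘ₗ LinearMap.lTensor H Coalgebra.comul := by
  refine TensorProduct.ext' fun h₁ h₂ => ?_
  simp only [LinearMap.comp_apply, TensorProduct.map_tmul, LinearMap.lTensor_tmul, nablaAt_tmul,
    psiOf_tmul]
  induction Coalgebra.comul (R := R) h₂ using TensorProduct.induction_on with
  | zero => simp only [tmul_zero, map_zero]
  | tmul g₁ g₂ => simp
  | add x y hx hy => simp only [tmul_add, map_add, hx, hy]

theorem psiMulLHS_psiOf_eq (hφ : IsPartiallyMultiplicative φ) :
    psiMulLHS (psiOf φ) = psiMulRHS (psiOf φ) := by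
  refine (psiMulLHS_eq_psiMulRHS_iff _).2 fun h a b => ?_
  calc nablaAt (psiOf φ) b (psiOf φ (h ⊗ₜ a))
      = TensorProduct.map
          (LinearMap.mul' R A ∘ₗ TensorProduct.map ((curry φ).flip a) ((curry φ).flip b))
          LinearMap.id
          ((TensorProduct.assoc R H H H).symm (Coalgebra.comul.lTensor H (Coalgebra.comul h))) := by
        rw [psiOf_tmul, ← LinearMap.comp_apply (nablaAt _ b), nablaAt_psiOf_comp_map]
        rfl
    _ = psiOf φ (h ⊗ₜ (a * b)) := by
        rw [Coalgebra.coassoc_symm_apply, LinearMap.map_rTensor, LinearMap.comp_assoc,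
          ← hφ.curry_flip_mul, psiOf_tmul]

end PsiOf

theorem psiOf_mul_and_nabla_idempotent (φ : H ⊗[R] A →ₗ[R] A)
    (hφ : IsPartiallyMultiplicative φ) :
    psiMulLHS (psiOf φ) = psiMulRHS (psiOf φ) ∧
      nabla (psiOf φ) ∘ₗ nabla (psiOf φ) = nabla (psiOf φ) :=
  have hψ := psiMulLHS_psiOf_eq φ hφ
  ⟨hψ, nabla_comp_nabla_of_psiMulLHS_eq _ hψ⟩
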